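/- arXiv:0710.0260 — 2 statements merged into one kernel-verified Lean document; each statement's English description precedes it below -/
import Mathlib

section
/- For every R[Γ]-module V and every q ≥ 1, the inductively defined higher order invariants satisfy H_q^0(Γ,Σ,V) = {v ∈ V : J_q·v = 0}, i.e. H_q^0(Γ,Σ,V) = V^{I^q} ∩ V^{I_Σ}, where V^J denotes the set of v ∈ V annihilated by the ideal J. -/
/-- The augmentation map `R[Γ] → R`, `∑ a_γ γ ↦ ∑ a_γ`. -/
noncomputable def aug (R Γ : Type*) [CommRing R] [Group Γ] :
    MonoidAlgebra R Γ →ₐ[R] R :=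
  MonoidAlgebra.lift R R Γ 1

/-- The augmentation ideal `I = ker(aug)`, viewed as an `R`-submodule of `R[Γ]`. -/
noncomputable def augIdeal (R Γ : Type*) [CommRing R] [Group Γ] :
    Submodule R (MonoidAlgebra R Γ) :=
  (RingHom.ker (aug R Γ).toRingHom).restrictScalars R

/-- The augmentation ideal `I_Σ` of a subgroup `Σ ≤ Γ` (the augmentation ideal of `R[Σ]`,
viewed inside `R[Γ]`); as an `R`-module it is spanned by the elements `σ - 1`, `σ ∈ Σ`. -/
noncomputable def augIdealOf (R : Type*) {Γ : Type*} [CommRing R] [Group Γ] (S : Subgroup Γ) :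
    Submodule R (MonoidAlgebra R Γ) :=
  Submodule.span R {x | ∃ σ ∈ S, x = MonoidAlgebra.of R Γ σ - 1}

/-- The ideal `J_q = I^q + R[Γ]·I_Σ` of `A = R[Γ]`. -/
noncomputable def Jideal (R : Type*) {Γ : Type*} [CommRing R] [Group Γ] (S : Subgroup Γ)
    (q : ℕ) : Ideal (MonoidAlgebra R Γ) :=
  Submodule.span (MonoidAlgebra R Γ)
    ((augIdeal R Γ ^ q : Submodule R (MonoidAlgebra R Γ)) ∪
      (augIdealOf R S : Set (MonoidAlgebra R Γ)))

/-- The higher order invariants `H_q^0(Γ,Σ,V)`, defined inductively: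
`H_1^0(Γ,Σ,V) = V^Γ`, and `H_{q+1}^0(Γ,Σ,V)` consists of those `v` with
`(γ-1)v ∈ H_q^0(Γ,Σ,V)` for all `γ ∈ Γ` and `(σ-1)v = 0` for all `σ ∈ Σ`. -/
def Hord (R Γ : Type*) [CommRing R] [Group Γ] (S : Subgroup Γ) (V : Type*) [AddCommGroup V]
    [Module (MonoidAlgebra R Γ) V] : ℕ → Set V
  | 0 => Set.univ
  | 1 => {v | ∀ γ : Γ, MonoidAlgebra.of R Γ γ • v = v}
  | (q + 2) => {v | (∀ γ : Γ, (MonoidAlgebra.of R Γ γ - 1) • v ∈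
        Hord R Γ S V (q + 1)) ∧ ∀ σ ∈ S, (MonoidAlgebra.of R Γ σ - 1) • v = 0}
/-! Since `I = span_R {γ - 1}` and `I_Σ = span_R {σ - 1}`, a vector is killed by `I^(q+1)` iff every
`(γ - 1) v` is killed by `I^q`, and it is killed by `I_Σ` iff it is `Σ`-invariant. Induction on `q`
then identifies `H_{q+1}^0` with `V^{I^(q+1)} ∩ V^{I_Σ}`; the one extra input is that `(γ - 1) v` is
again `Σ`-invariant when `v` is, because `Σ` is normal: `σ γ v = γ (γ⁻¹ σ γ) v = γ v`. -/

section Annihilation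

variable {R A V : Type*} [AddCommMonoid V]

theorem forall_mem_span_smul_eq_zero_iff [Semiring R] [Semiring A] [Module R A]
    [IsScalarTower R A A] [Module A V] (s : Set A) (v : V) :
    (∀ m ∈ Submodule.span R s, m • v = 0) ↔ ∀ m ∈ s, m • v = 0 := by
  have := Submodule.span_le (p := (Ideal.torsionOf A V v).restrictScalars R) (s := s)
  simpa [SetLike.le_def, Set.subset_def, Ideal.mem_torsionOf_iff] using this

theorem forall_mem_mul_span_smul_eq_zero_iff [CommSemiring R] [Semiring A] [Algebra R A]
    [Module A V] (N : Submodule R A) (s : Set A) (v : V) :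
    (∀ m ∈ N * Submodule.span R s, m • v = 0) ↔ ∀ x ∈ s, ∀ m ∈ N, m • x • v = 0 := by
  let P := (Ideal.torsionOf A V v).restrictScalars R
  have hP : N * Submodule.span R s ≤ P ↔ ∀ m ∈ N, s ⊆ P.comap (LinearMap.mulLeft R m) :=
    Submodule.mul_le.trans
      (forall₂_congr fun m _ => Submodule.span_le (p := P.comap (LinearMap.mulLeft R m)))
  simp only [SetLike.le_def, Set.subset_def, P, SetLike.mem_coe, Submodule.mem_comap,
    Submodule.restrictScalars_mem, Ideal.mem_torsionOf_iff, LinearMap.mulLeft_apply,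
    mul_smul] at hP
  exact hP.trans ⟨fun h x hx m hm => h m hm x hx, fun h m hm x hx => h x hx m hm⟩

end Annihilation

section GroupAlgebra

variable {R Γ V : Type*} [CommRing R] [Group Γ] [AddCommGroup V]
  [Module (MonoidAlgebra R Γ) V]

theorem of_sub_one_mem_augIdeal (γ : Γ) : MonoidAlgebra.of R Γ γ - 1 ∈ augIdeal R Γ := by
  simp [augIdeal, aug]

theorem augIdeal_eq_span :
    augIdeal R Γ = Submodule.span R {x | ∃ γ : Γ, x = MonoidAlgebra.of R Γ γ - 1} := by
  set I := Submodule.span R {x | ∃ γ : Γ, x = MonoidAlgebra.of R Γ γ - 1}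
  refine le_antisymm (fun x hx => ?_) (Submodule.span_le.2 ?_)
  · -- `x ↦ x - aug x` is `R`-linear and sends `γ` to `γ - 1`
    have h : ∀ y, y - algebraMap R _ (aug R Γ y) ∈ I := by
      intro y
      induction y using MonoidAlgebra.induction_on with
      | of γ => exact Submodule.subset_span ⟨γ, by simp [aug, MonoidAlgebra.one_def]⟩
      | add y z hy hz => simpa [add_sub_add_comm] using add_mem hy hz
      | smul r y hy =>
        convert Submodule.smul_mem I r hy using 1
        rw [map_smul, smul_sub, smul_eq_mul, map_mul, ← Algebra.smul_def]
    have hx0 : aug R Γ x = 0 := hx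
    simpa [hx0] using h x
  · rintro _ ⟨γ, rfl⟩
    exact of_sub_one_mem_augIdeal γ

theorem of_sub_one_smul_eq_zero_iff (γ : Γ) (v : V) :
    (MonoidAlgebra.of R Γ γ - 1) • v = 0 ↔ MonoidAlgebra.of R Γ γ • v = v := by
  rw [sub_smul, one_smul, sub_eq_zero]

theorem forall_mem_augIdeal_smul_eq_zero_iff (v : V) :
    (∀ m ∈ augIdeal R Γ, m • v = 0) ↔ ∀ γ : Γ, MonoidAlgebra.of R Γ γ • v = v := by
  rw [augIdeal_eq_span, forall_mem_span_smul_eq_zero_iff]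
  constructor
  · intro h γ
    exact (of_sub_one_smul_eq_zero_iff γ v).1 (h _ ⟨γ, rfl⟩)
  · rintro h _ ⟨γ, rfl⟩
    exact (of_sub_one_smul_eq_zero_iff γ v).2 (h γ)

theorem forall_mem_augIdealOf_smul_eq_zero_iff (S : Subgroup Γ) (v : V) :
    (∀ m ∈ augIdealOf R S, m • v = 0) ↔ ∀ σ ∈ S, MonoidAlgebra.of R Γ σ • v = v := by
  rw [augIdealOf, forall_mem_span_smul_eq_zero_iff]
  constructor
  · intro h σ hσ
    exact (of_sub_one_smul_eq_zero_iff σ v).1 (h _ ⟨σ, hσ, rfl⟩)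
  · rintro h _ ⟨σ, hσ, rfl⟩
    exact (of_sub_one_smul_eq_zero_iff σ v).2 (h σ hσ)

theorem forall_mem_augIdeal_pow_succ_smul_eq_zero_iff (q : ℕ) (v : V) :
    (∀ m ∈ augIdeal R Γ ^ (q + 1), m • v = 0) ↔
      ∀ γ : Γ, ∀ m ∈ augIdeal R Γ ^ q, m • (MonoidAlgebra.of R Γ γ - 1) • v = 0 := by
  rw [pow_succ, augIdeal_eq_span, forall_mem_mul_span_smul_eq_zero_iff]
  simp

theorem forall_mem_Jideal_smul_eq_zero_iff (S : Subgroup Γ) (q : ℕ) (v : V) :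
    (∀ m ∈ Jideal R S q, m • v = 0) ↔
      (∀ m ∈ augIdeal R Γ ^ q, m • v = 0) ∧ ∀ m ∈ augIdealOf R S, m • v = 0 := by
  rw [Jideal, forall_mem_span_smul_eq_zero_iff]
  simp only [Set.mem_union, SetLike.mem_coe, or_imp, forall_and]

theorem of_smul_of_smul_eq_of_smul {S : Subgroup Γ} [S.Normal] {v : V}
    (hv : ∀ σ ∈ S, MonoidAlgebra.of R Γ σ • v = v) (γ : Γ) :
    ∀ σ ∈ S, MonoidAlgebra.of R Γ σ • MonoidAlgebra.of R Γ γ • v = MonoidAlgebra.of R Γ γ • v := by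
  intro σ hσ
  have hconj : MonoidAlgebra.of R Γ σ * MonoidAlgebra.of R Γ γ =
      MonoidAlgebra.of R Γ γ * MonoidAlgebra.of R Γ (γ⁻¹ * σ * γ) := by
    rw [← map_mul, ← map_mul]
    group
  rw [← mul_smul, hconj, mul_smul, hv _ (Subgroup.Normal.conj_mem' ‹_› σ hσ γ)]

end GroupAlgebra

theorem Hord_succ_eq {R Γ : Type*} [CommRing R] [Group Γ] (S : Subgroup Γ) [S.Normal]
    {V : Type*} [AddCommGroup V] [Module (MonoidAlgebra R Γ) V] (q : ℕ) :
    Hord R Γ S V (q + 1) =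
      {v : V | ∀ m ∈ augIdeal R Γ ^ (q + 1), m • v = 0} ∩
      {v : V | ∀ m ∈ augIdealOf R S, m • v = 0} := by
  ext v
  simp only [Set.mem_inter_iff, Set.mem_ofPred_eq, forall_mem_augIdealOf_smul_eq_zero_iff]
  induction q generalizing v with
  | zero =>
    simp only [Hord, zero_add, pow_one, forall_mem_augIdeal_smul_eq_zero_iff]
    exact ⟨fun h => ⟨h, fun σ _ => h σ⟩, And.left⟩
  | succ q ih =>
    simp only [Hord, Set.mem_ofPred_eq, ih, forall_and, of_sub_one_smul_eq_zero_iff,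
      forall_mem_augIdeal_pow_succ_smul_eq_zero_iff (q + 1)]
    refine ⟨fun ⟨⟨hpow, _⟩, hS⟩ => ⟨hpow, hS⟩, fun ⟨hpow, hS⟩ => ⟨⟨hpow, ?_⟩, hS⟩⟩
    intro γ σ hσ
    have hγ := of_smul_of_smul_eq_of_smul hS γ σ hσ
    rw [sub_smul, one_smul, smul_sub, hγ, hS σ hσ]

/-- For every `R[Γ]`-module `V` and every `q ≥ 1`, the higher order invariants satisfy
`H_q^0(Γ,Σ,V) = {v ∈ V : J_q · v = 0} = V^{I^q} ∩ V^{I_Σ}`. -/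
theorem Hord_eq_annihilator_Jideal (R Γ : Type*) [CommRing R] [Group Γ]
    (S : Subgroup Γ) [S.Normal] (V : Type*) [AddCommGroup V]
    [Module (MonoidAlgebra R Γ) V] (q : ℕ) (hq : 1 ≤ q) :
    Hord R Γ S V q = {v : V | ∀ m ∈ Jideal R S q, m • v = 0} ∧
    Hord R Γ S V q =
      {v : V | ∀ m ∈ (augIdeal R Γ ^ q : Submodule R (MonoidAlgebra R Γ)), m • v = 0} ∩
      {v : V | ∀ m ∈ augIdealOf R S, m • v = 0} := by
  obtain ⟨p, rfl⟩ := Nat.exists_eq_add_of_le' hq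
  refine ⟨?_, Hord_succ_eq S p⟩
  rw [Hord_succ_eq]
  ext v
  exact (forall_mem_Jideal_smul_eq_zero_iff S _ v).symm
end

section
/- Let Γ be a finite group, Σ an arbitrary normal subgroup of Γ, and V an R[Γ]-module such that the fixed module V^Γ contains no nontrivial |Γ|-torsion (this holds in particular when the order |Γ| is invertible in R). Then for every q ≥ 1 the natural inclusion H_q^0(Γ,Σ,V) ⊆ H_{q+1}^0(Γ,Σ,V) is an equality; hence all higher order invariants coincide with H_1^0(Γ,Σ,V). -/
/-!
If `(γ - 1) v` is `Γ`-fixed for every `γ`, then `γ ↦ (γ - 1) v` is a homomorphism from `Γ` to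
the additive group `V`, because `(γδ - 1) v = γ (δ - 1) v + (γ - 1) v`. A homomorphism from a
finite group into an abelian group is killed by `|Γ|`, so each `(γ - 1) v` is a `Γ`-fixed
`|Γ|`-torsion vector, hence zero. Thus `H_2^0 = H_1^0`, and since `H_{q+2}^0` is determined
by `H_{q+1}^0`, the sequence is constant from `q = 1` on.
-/

open MonoidAlgebra

section

variable {R Γ V : Type*} [CommRing R] [Group Γ] [AddCommGroup V] [Module (MonoidAlgebra R Γ) V]
  {S : Subgroup Γ}

theorem of_sub_one_smul_eq_zero {v : V} (hv : ∀ γ : Γ, of R Γ γ • v = v) (γ : Γ) :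
    (of R Γ γ - 1) • v = 0 := by
  rw [sub_smul, one_smul, hv γ, sub_self]

theorem of_mul_sub_one_smul {v : V}
    (hv : ∀ γ δ : Γ, of R Γ δ • (of R Γ γ - 1) • v = (of R Γ γ - 1) • v) (γ δ : Γ) :
    (of R Γ (γ * δ) - 1) • v = (of R Γ γ - 1) • v + (of R Γ δ - 1) • v := by
  have hδ := hv δ γ
  rw [sub_smul, one_smul, smul_sub, sub_eq_iff_eq_add] at hδ
  rw [map_mul, sub_smul, mul_smul, hδ, sub_smul, sub_smul, one_smul]
  abel

theorem of_pow_sub_one_smul {v : V}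
    (hv : ∀ γ δ : Γ, of R Γ δ • (of R Γ γ - 1) • v = (of R Γ γ - 1) • v) (γ : Γ) (n : ℕ) :
    (of R Γ (γ ^ n) - 1) • v = n • (of R Γ γ - 1) • v := by
  induction n with
  | zero => rw [pow_zero, map_one, sub_self, zero_smul, zero_smul]
  | succ n ih => rw [pow_succ, of_mul_sub_one_smul hv, ih, succ_nsmul]

theorem card_smul_of_sub_one_smul_eq_zero [Fintype Γ] {v : V}
    (hv : ∀ γ δ : Γ, of R Γ δ • (of R Γ γ - 1) • v = (of R Γ γ - 1) • v) (γ : Γ) :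
    Fintype.card Γ • (of R Γ γ - 1) • v = 0 := by
  rw [← of_pow_sub_one_smul hv, pow_card_eq_one, map_one, sub_self, zero_smul]

theorem Hord_two_eq_one [Fintype Γ]
    (htors : ∀ v : V, (∀ γ : Γ, of R Γ γ • v = v) → Fintype.card Γ • v = 0 → v = 0) :
    Hord R Γ S V 2 = Hord R Γ S V 1 := by
  ext v
  constructor
  · rintro ⟨hv, -⟩ γ
    have hγ := htors _ (hv γ) (card_smul_of_sub_one_smul_eq_zero hv γ)
    rwa [sub_smul, one_smul, sub_eq_zero] at hγ
  · intro hv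
    refine ⟨fun γ δ => ?_, fun σ _ => of_sub_one_smul_eq_zero hv σ⟩
    rw [of_sub_one_smul_eq_zero hv γ, smul_zero]

theorem Hord_succ_succ_congr {p q : ℕ} (h : Hord R Γ S V (p + 1) = Hord R Γ S V (q + 1)) :
    Hord R Γ S V (p + 2) = Hord R Γ S V (q + 2) := by
  simp only [Hord, h]

theorem Hord_succ_eq_self [Fintype Γ]
    (htors : ∀ v : V, (∀ γ : Γ, of R Γ γ • v = v) → Fintype.card Γ • v = 0 → v = 0)
    {q : ℕ} (hq : 1 ≤ q) : Hord R Γ S V (q + 1) = Hord R Γ S V q := by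
  induction q, hq using Nat.le_induction with
  | base => exact Hord_two_eq_one htors
  | succ q hq ih =>
    obtain ⟨p, rfl⟩ := Nat.exists_eq_add_of_le' hq
    exact Hord_succ_succ_congr ih

end

theorem Hord_eq_of_finite_general (R Γ : Type*) [CommRing R] [Group Γ] [Fintype Γ]
    (S : Subgroup Γ) (V : Type*) [AddCommGroup V]
    [Module (MonoidAlgebra R Γ) V]
    (htors : ∀ v : V, (∀ γ : Γ, MonoidAlgebra.of R Γ γ • v = v) →
      (Fintype.card Γ) • v = 0 → v = 0) :
    (∀ q : ℕ, 1 ≤ q → Hord R Γ S V (q + 1) = Hord R Γ S V q) ∧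
    (∀ q : ℕ, 1 ≤ q → Hord R Γ S V q = Hord R Γ S V 1) := by
  refine ⟨fun q hq => Hord_succ_eq_self htors hq, fun q hq => ?_⟩
  induction q, hq using Nat.le_induction with
  | base => rfl
  | succ q hq ih => rw [Hord_succ_eq_self htors hq, ih]

/-- Let `Γ` be a finite group, `Σ` an arbitrary normal subgroup and `V` an `R[Γ]`-module
such that the fixed module `V^Γ` has no nontrivial `|Γ|`-torsion (which holds in particular
when `|Γ|` is invertible in `R`).  Then for every `q ≥ 1` the natural inclusion
`H_q^0(Γ,Σ,V) ⊆ H_{q+1}^0(Γ,Σ,V)` is an equality, and hence all higher order invariants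
coincide with `H_1^0(Γ,Σ,V)`. -/
theorem Hord_eq_of_finite (R Γ : Type*) [CommRing R] [Group Γ] [Fintype Γ]
    (S : Subgroup Γ) [S.Normal] (V : Type*) [AddCommGroup V]
    [Module (MonoidAlgebra R Γ) V]
    (htors : ∀ v : V, (∀ γ : Γ, MonoidAlgebra.of R Γ γ • v = v) →
      (Fintype.card Γ) • v = 0 → v = 0) :
    (∀ q : ℕ, 1 ≤ q → Hord R Γ S V (q + 1) = Hord R Γ S V q) ∧
    (∀ q : ℕ, 1 ≤ q → Hord R Γ S V q = Hord R Γ S V 1) :=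
  Hord_eq_of_finite_general R Γ S V htors
end
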